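/- Let R be a finite commutative local ring of order q^n with q odd, R/J(R) of order q, and J(R)^{n-1} ≠ 0. Let k = 2l be even with 0 < k < n and suppose u ∈ J^k \ J^{k+1} is a square of an element of R. Then the set { v ∈ R : v^2 = u } has exactly 2q^l elements; moreover, each such v lies in J^l \ J^{l+1} and any two solutions v, v' satisfy v = ±v' + j for some j ∈ J^{n-l}. -/

import Mathlib

/-!
The counting hypotheses leave no room in the chain `R ⊋ J ⊋ J ^ 2 ⊋ ⋯ ⊋ J ^ n = 0`: every step
has index exactly `q`. In particular `J / J ^ 2` has `q` elements, so `J = (π)` by Nakayama, and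
then an element of `J ^ a \ J ^ (a + 1)` generates `J ^ a`; these "orders" add under
multiplication as long as the product is nonzero. Hence every square root of `u` has order `l`.
For two square roots `v, v'` we have `(v - v') (v + v') = 0`, and since `2` is a unit one factor
has order exactly `l`, which forces the other one into its annihilator `J ^ (n - l)`. Conversely
both cosets `±v + J ^ (n - l)` consist of square roots, and they are disjoint, giving `2 q ^ l`.
-/

open IsLocalRing Pointwise

theorem Ideal.exists_mem_pow_notMem_pow_succ_of_notMem {R : Type*} [CommSemiring R]
    {I : Ideal R} {x : R} {m : ℕ} (hx : x ∉ I ^ m) : ∃ b < m, x ∈ I ^ b ∧ x ∉ I ^ (b + 1) := by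
  by_contra! h
  have hmem : ∀ b ≤ m, x ∈ I ^ b := by
    intro b hb
    induction b with
    | zero => simp
    | succ b ih => exact h b (by omega) (ih (by omega))
  exact hx (hmem m le_rfl)

theorem Ideal.add_sq_eq_sq_of_mem_pow {R : Type*} [CommRing R] {I : Ideal R} {n l : ℕ}
    (hn : I ^ n = ⊥) (hl : 2 * l ≤ n) {s j : R} (hs : s ∈ I ^ l) (hj : j ∈ I ^ (n - l)) :
    (s + j) ^ 2 = s ^ 2 := by
  have hmul : ∀ {a b : ℕ} {x y : R}, n ≤ a + b → x ∈ I ^ a → y ∈ I ^ b → x * y = 0 := by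
    intro a b x y hab hx hy
    have hxy := Ideal.pow_le_pow_right hab (pow_add I a b ▸ Ideal.mul_mem_mul hx hy)
    rwa [hn, Ideal.mem_bot] at hxy
  linear_combination 2 * hmul (by omega) hs hj + hmul (by omega) hj hj

theorem isUnit_two_of_odd_card {R : Type*} [CommRing R] [Fintype R] (h : Odd (Fintype.card R)) :
    IsUnit (2 : R) := by
  obtain ⟨t, ht⟩ := h
  have h0 : (2 * t + 1 : R) = 0 := by exact_mod_cast ht ▸ Nat.cast_card_eq_zero R
  exact IsUnit.of_mul_eq_one (-t : R) (by linear_combination -h0)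

namespace IsLocalRing

variable {R : Type*} [CommRing R] [IsLocalRing R]

section Module

variable {M : Type*} [AddCommGroup M] [Module R M] [Finite M]

theorem card_residue_le_card [Nontrivial M] : Nat.card (R ⧸ maximalIdeal R) ≤ Nat.card M := by
  obtain ⟨x, hx⟩ := exists_ne (0 : M)
  have hle : Ideal.torsionOf R M x ≤ maximalIdeal R :=
    le_maximalIdeal fun h => hx ((Ideal.torsionOf_eq_top_iff R x).mp h)
  calc Nat.card (R ⧸ maximalIdeal R) ≤ Nat.card (R ∙ x) :=
        Nat.card_le_card_of_surjective
          (Ideal.Quotient.factor hle ∘ (Ideal.quotTorsionOfEquivSpanSingleton R M x).symm)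
          ((Ideal.Quotient.factor_surjective hle).comp (LinearEquiv.surjective _))
    _ ≤ Nat.card M := Nat.card_le_card_of_injective _ Subtype.val_injective

theorem card_residue_mul_card_le_of_lt {N' N : Submodule R M} (h : N' < N) :
    Nat.card (R ⧸ maximalIdeal R) * Nat.card N' ≤ Nat.card N := by
  set P := N'.comap N.subtype
  have : Finite (N ⧸ P) := Finite.of_surjective _ P.mkQ_surjective
  have : Nontrivial (N ⧸ P) :=
    Submodule.Quotient.nontrivial_iff.mpr fun hP => h.not_ge (Submodule.comap_subtype_eq_top.mp hP)
  rw [P.card_eq_card_quotient_mul_card,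
    ← Nat.card_congr (Submodule.comapSubtypeEquivOfLe h.le).toEquiv, mul_comm]
  exact Nat.mul_le_mul_left _ card_residue_le_card

end Module

theorem pow_maximalIdeal_succ_lt [IsNoetherianRing R] {m : ℕ} (h : maximalIdeal R ^ m ≠ ⊥) :
    maximalIdeal R ^ (m + 1) < maximalIdeal R ^ m :=
  lt_of_le_of_ne (Ideal.pow_le_pow_right m.le_succ) fun heq => h <|
    Submodule.eq_bot_of_le_smul_of_le_jacobson_bot _ _ (IsNoetherian.noetherian _)
      (by rw [Ideal.smul_eq_mul, ← pow_succ', heq]) (maximalIdeal_le_jacobson ⊥)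

section Finite

variable [Finite R] {q n : ℕ}

theorem pow_mul_card_pow_maximalIdeal_le (hres : Nat.card (R ⧸ maximalIdeal R) = q)
    (hn : maximalIdeal R ^ (n - 1) ≠ ⊥) {i j : ℕ} (hij : i + j ≤ n) :
    q ^ j * Nat.card ↥(maximalIdeal R ^ (i + j)) ≤ Nat.card ↥(maximalIdeal R ^ i) := by
  induction j with
  | zero => simp
  | succ j ih =>
    have hne : maximalIdeal R ^ (i + j) ≠ ⊥ := fun h =>
      hn (le_bot_iff.mp (h ▸ Ideal.pow_le_pow_right (by omega)))
    calc q ^ (j + 1) * Nat.card ↥(maximalIdeal R ^ (i + (j + 1)))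
        = q ^ j * (q * Nat.card ↥(maximalIdeal R ^ (i + j + 1))) := by
          rw [← add_assoc, pow_succ q j, mul_assoc]
      _ ≤ q ^ j * Nat.card ↥(maximalIdeal R ^ (i + j)) :=
          Nat.mul_le_mul_left _
            (hres ▸ card_residue_mul_card_le_of_lt (pow_maximalIdeal_succ_lt hne))
      _ ≤ Nat.card ↥(maximalIdeal R ^ i) := ih (by omega)

theorem card_pow_maximalIdeal (hcard : Nat.card R = q ^ n)
    (hres : Nat.card (R ⧸ maximalIdeal R) = q) (hn : maximalIdeal R ^ (n - 1) ≠ ⊥) {i : ℕ}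
    (hi : i ≤ n) : Nat.card ↥(maximalIdeal R ^ i) = q ^ (n - i) := by
  have : Finite (R ⧸ maximalIdeal R) := Finite.of_surjective _ Ideal.Quotient.mk_surjective
  have hq : 0 < q := hres ▸ Nat.card_pos
  have hupper := pow_mul_card_pow_maximalIdeal_le (i := 0) hres hn (by omega : 0 + i ≤ n)
  rw [zero_add, pow_zero, Ideal.one_eq_top, Nat.card_congr Submodule.topEquiv.toEquiv, hcard,
    ← Nat.add_sub_cancel' hi, pow_add] at hupper
  have hlower := pow_mul_card_pow_maximalIdeal_le hres hn (by omega : i + (n - i) ≤ n)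
  have hpos : 0 < Nat.card ↥(maximalIdeal R ^ (i + (n - i))) := Nat.card_pos
  exact le_antisymm (Nat.le_of_mul_le_mul_left hupper (pow_pos hq i))
    ((Nat.le_mul_of_pos_right _ hpos).trans hlower)

theorem pow_maximalIdeal_eq_bot (hcard : Nat.card R = q ^ n)
    (hres : Nat.card (R ⧸ maximalIdeal R) = q) (hn : maximalIdeal R ^ (n - 1) ≠ ⊥) :
    maximalIdeal R ^ n = ⊥ := by
  have h := card_pow_maximalIdeal hcard hres hn le_rfl
  rw [Nat.sub_self, pow_zero] at h
  have := (Nat.card_eq_one_iff_unique.mp h).1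
  exact Submodule.eq_bot_of_subsingleton

theorem exists_maximalIdeal_eq_span_singleton
    (h : Nat.card ↥(maximalIdeal R) =
      Nat.card (R ⧸ maximalIdeal R) * Nat.card ↥(maximalIdeal R ^ 2)) :
    ∃ π : R, maximalIdeal R = Ideal.span {π} := by
  set J := maximalIdeal R
  have : Finite (R ⧸ J) := Finite.of_surjective _ Ideal.Quotient.mk_surjective
  have hq : 1 < Nat.card (R ⧸ J) := Finite.one_lt_card_iff_nontrivial.mpr inferInstance
  have hlt : J ^ 2 < J := lt_of_le_of_ne (Ideal.pow_le_self two_ne_zero) fun heq => by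
    have hJ : 0 < Nat.card ↥J := Nat.card_pos
    rw [heq] at h
    nlinarith
  obtain ⟨π, hπJ, hπ⟩ := SetLike.exists_of_lt hlt
  set N := Ideal.span {π} ⊔ J ^ 2
  have hNJ : N ≤ J := sup_le ((Ideal.span_singleton_le_iff_mem _).mpr hπJ) hlt.le
  have hN : J ≤ N := by
    have hJN : J ^ 2 < N :=
      lt_of_le_of_ne le_sup_right fun heq =>
        hπ (heq ▸ Ideal.mem_sup_left (Ideal.mem_span_singleton_self π))
    have hcardN : Nat.card ↥J ≤ Nat.card ↥N := h ▸ card_residue_mul_card_le_of_lt hJN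
    exact (Submodule.toAddSubgroup_injective
      (AddSubgroup.eq_of_le_of_card_ge (H := N.toAddSubgroup) (K := J.toAddSubgroup) hNJ hcardN)).ge
  refine ⟨π, le_antisymm ?_ ((Ideal.span_singleton_le_iff_mem _).mpr hπJ)⟩
  refine Submodule.le_of_le_smul_of_le_jacobson_bot (IsNoetherian.noetherian _)
    (maximalIdeal_le_jacobson ⊥) ?_
  rwa [Ideal.smul_eq_mul, ← sq]

end Finite

section Principal

variable {π : R}

theorem span_singleton_eq_pow_maximalIdeal (hπ : maximalIdeal R = Ideal.span {π}) {x : R}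
    {a : ℕ} (hx : x ∈ maximalIdeal R ^ a) (hx' : x ∉ maximalIdeal R ^ (a + 1)) :
    Ideal.span {x} = maximalIdeal R ^ a := by
  have hspan : maximalIdeal R ^ a = Ideal.span {π ^ a} := by rw [hπ, Ideal.span_singleton_pow]
  rw [hspan] at hx ⊢
  obtain ⟨r, rfl⟩ := Ideal.mem_span_singleton'.mp hx
  have hr : IsUnit r := by
    by_contra hr
    refine hx' ?_
    rw [pow_succ', hspan]
    exact Ideal.mul_mem_mul hr (Ideal.mem_span_singleton_self _)
  exact Ideal.span_singleton_mul_left_unit hr _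

variable [IsNoetherianRing R]

theorem mul_notMem_pow_maximalIdeal_succ (hπ : maximalIdeal R = Ideal.span {π}) {x y : R}
    {a b : ℕ} (hx : x ∈ maximalIdeal R ^ a) (hx' : x ∉ maximalIdeal R ^ (a + 1))
    (hy : y ∈ maximalIdeal R ^ b) (hy' : y ∉ maximalIdeal R ^ (b + 1))
    (hab : maximalIdeal R ^ (a + b) ≠ ⊥) : x * y ∉ maximalIdeal R ^ (a + b + 1) := by
  intro hxy
  have hspan : Ideal.span {x * y} = maximalIdeal R ^ (a + b) := by
    rw [← Ideal.span_singleton_mul_span_singleton, span_singleton_eq_pow_maximalIdeal hπ hx hx',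
      span_singleton_eq_pow_maximalIdeal hπ hy hy', pow_add]
  exact (pow_maximalIdeal_succ_lt hab).not_ge
    (hspan ▸ (Ideal.span_singleton_le_iff_mem _).mpr hxy)

theorem mem_pow_maximalIdeal_of_mul_eq_zero (hπ : maximalIdeal R = Ideal.span {π}) {n a : ℕ}
    (hn : maximalIdeal R ^ (n - 1) ≠ ⊥) {x y : R} (hx : x ∈ maximalIdeal R ^ a)
    (hx' : x ∉ maximalIdeal R ^ (a + 1)) (hxy : x * y = 0) : y ∈ maximalIdeal R ^ (n - a) := by
  by_cases hyn : y ∈ maximalIdeal R ^ n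
  · exact Ideal.pow_le_pow_right (Nat.sub_le n a) hyn
  obtain ⟨b, hb, hyb, hyb'⟩ := Ideal.exists_mem_pow_notMem_pow_succ_of_notMem hyn
  by_contra hy
  have hab : a + b < n := by
    by_contra hab
    exact hy (Ideal.pow_le_pow_right (by omega) hyb)
  refine mul_notMem_pow_maximalIdeal_succ hπ hx hx' hyb hyb' (fun h => hn ?_) (hxy ▸ zero_mem _)
  exact le_bot_iff.mp (h ▸ Ideal.pow_le_pow_right (by omega))

theorem mem_pow_notMem_pow_succ_of_sq (hπ : maximalIdeal R = Ideal.span {π}) {v : R} {l : ℕ}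
    (hv : v ^ 2 ∈ maximalIdeal R ^ (2 * l)) (hv' : v ^ 2 ∉ maximalIdeal R ^ (2 * l + 1)) :
    v ∈ maximalIdeal R ^ l ∧ v ∉ maximalIdeal R ^ (l + 1) := by
  have hsq : ∀ {c : ℕ}, v ∈ maximalIdeal R ^ c → v ^ 2 ∈ maximalIdeal R ^ (2 * c) := fun h => by
    rw [pow_mul']
    exact Ideal.pow_mem_pow h 2
  have hvl : v ∉ maximalIdeal R ^ (l + 1) := fun h =>
    hv' (Ideal.pow_le_pow_right (by omega) (hsq h))
  obtain ⟨b, hb, hvb, hvb'⟩ := Ideal.exists_mem_pow_notMem_pow_succ_of_notMem hvl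
  obtain rfl : b = l := by
    by_contra hbl
    have hne : maximalIdeal R ^ (b + b) ≠ ⊥ := fun h => hv' <| by
      have h0 := hsq hvb
      rw [two_mul, h, Ideal.mem_bot] at h0
      exact h0 ▸ zero_mem _
    refine mul_notMem_pow_maximalIdeal_succ hπ hvb hvb' hvb hvb' hne ?_
    exact sq v ▸ Ideal.pow_le_pow_right (by omega) hv
  exact ⟨hvb, hvl⟩

theorem sub_mem_or_add_mem_of_sq_eq_sq (hπ : maximalIdeal R = Ideal.span {π})
    (h2 : IsUnit (2 : R)) {n l : ℕ} (hn : maximalIdeal R ^ (n - 1) ≠ ⊥) {s v : R}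
    (hs : s ∈ maximalIdeal R ^ l) (hs' : s ∉ maximalIdeal R ^ (l + 1))
    (hv : v ∈ maximalIdeal R ^ l) (hvs : v ^ 2 = s ^ 2) :
    v - s ∈ maximalIdeal R ^ (n - l) ∨ v + s ∈ maximalIdeal R ^ (n - l) := by
  have h0 : (v - s) * (v + s) = 0 := by linear_combination hvs
  have hsub_or_add : v - s ∉ maximalIdeal R ^ (l + 1) ∨ v + s ∉ maximalIdeal R ^ (l + 1) := by
    by_contra! h
    refine hs' ((Ideal.unit_mul_mem_iff_mem _ h2).mp ?_)
    rw [show 2 * s = v + s - (v - s) by ring]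
    exact sub_mem h.2 h.1
  rcases hsub_or_add with h | h
  · exact Or.inr (mem_pow_maximalIdeal_of_mul_eq_zero hπ hn (sub_mem hv hs) h h0)
  · exact Or.inl
      (mem_pow_maximalIdeal_of_mul_eq_zero hπ hn (add_mem hv hs) h (by rw [mul_comm, h0]))

end Principal

theorem ncard_setOf_sq_eq [Finite R] {π : R} (hπ : maximalIdeal R = Ideal.span {π})
    (h2 : IsUnit (2 : R)) {n l : ℕ} (hn : maximalIdeal R ^ n = ⊥)
    (hn' : maximalIdeal R ^ (n - 1) ≠ ⊥) (hl : 2 * l < n)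
    {u s : R} (hu : u ∈ maximalIdeal R ^ (2 * l)) (hu' : u ∉ maximalIdeal R ^ (2 * l + 1))
    (hs : s ^ 2 = u) :
    {v : R | v ^ 2 = u}.ncard = 2 * Nat.card ↥(maximalIdeal R ^ (n - l)) := by
  set K : Set R := ((maximalIdeal R ^ (n - l) : Ideal R) : Set R)
  obtain ⟨hsl, hsl'⟩ := mem_pow_notMem_pow_succ_of_sq hπ (hs ▸ hu) (hs ▸ hu')
  have hsol : {v : R | v ^ 2 = u} = (s +ᵥ K) ∪ (-s +ᵥ K) := by
    ext v
    simp only [Set.mem_ofPred_eq, Set.mem_union, Set.mem_vadd_set, vadd_eq_add]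
    constructor
    · intro hv
      have hvl := (mem_pow_notMem_pow_succ_of_sq hπ (hv ▸ hu) (hv ▸ hu')).1
      rcases sub_mem_or_add_mem_of_sq_eq_sq hπ h2 hn' hsl hsl' hvl (hv.trans hs.symm) with h | h
      exacts [Or.inl ⟨v - s, h, by ring⟩, Or.inr ⟨v + s, h, by ring⟩]
    · rintro (⟨j, hj, rfl⟩ | ⟨j, hj, rfl⟩)
      · rw [Ideal.add_sq_eq_sq_of_mem_pow hn hl.le hsl hj, hs]
      · rw [Ideal.add_sq_eq_sq_of_mem_pow hn hl.le (neg_mem hsl) hj, neg_sq, hs]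
  have hdisj : Disjoint (s +ᵥ K) (-s +ᵥ K) := by
    refine Set.disjoint_left.mpr ?_
    rintro _ ⟨j, hj, rfl⟩ ⟨j', hj', hjj'⟩
    refine hsl' ((Ideal.unit_mul_mem_iff_mem _ h2).mp
      (Ideal.pow_le_pow_right (show l + 1 ≤ n - l by omega) ?_))
    rw [show 2 * s = j' - j by simp only [vadd_eq_add] at hjj'; linear_combination -hjj']
    exact sub_mem hj' hj
  rw [hsol, Set.ncard_union_eq hdisj, Set.ncard_vadd_set, Set.ncard_vadd_set, two_mul,
    ← Nat.card_coe_set_eq, SetLike.coe_sort_coe]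

end IsLocalRing

theorem sqrt_set_in_radical_power {R : Type*} [CommRing R] [Fintype R] [IsLocalRing R]
    (q n l : ℕ) (hq : Odd q) (hk0 : 0 < 2 * l) (hkn : 2 * l < n)
    (hcard : Fintype.card R = q ^ n)
    (hres : Nat.card (R ⧸ (⊥ : Ideal R).jacobson) = q)
    (hJ : ((⊥ : Ideal R).jacobson) ^ (n - 1) ≠ ⊥)
    (u : R) (hu : u ∈ ((⊥ : Ideal R).jacobson) ^ (2 * l))
    (hu' : u ∉ ((⊥ : Ideal R).jacobson) ^ (2 * l + 1))
    (hsq : ∃ s : R, s ^ 2 = u) :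
    {v : R | v ^ 2 = u}.ncard = 2 * q ^ l ∧
    (∀ v : R, v ^ 2 = u →
      v ∈ ((⊥ : Ideal R).jacobson) ^ l ∧ v ∉ ((⊥ : Ideal R).jacobson) ^ (l + 1)) ∧
    (∀ v v' : R, v ^ 2 = u → v' ^ 2 = u →
      ∃ j ∈ ((⊥ : Ideal R).jacobson) ^ (n - l), v = v' + j ∨ v = -v' + j) := by
  rw [jacobson_eq_maximalIdeal ⊥ bot_ne_top] at hres hJ hu hu' ⊢
  have hcardR : Nat.card R = q ^ n := Nat.card_eq_fintype_card.trans hcard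
  have hcardJ (i : ℕ) (hi : i ≤ n) : Nat.card ↥(maximalIdeal R ^ i) = q ^ (n - i) :=
    card_pow_maximalIdeal hcardR hres hJ hi
  obtain ⟨π, hπ⟩ : ∃ π : R, maximalIdeal R = Ideal.span {π} := by
    refine exists_maximalIdeal_eq_span_singleton ?_
    have hcard1 := hcardJ 1 (by omega)
    rw [pow_one] at hcard1
    rw [hcard1, hcardJ 2 (by omega), hres, ← pow_succ']
    congr 1
    omega
  have h2 : IsUnit (2 : R) := isUnit_two_of_odd_card (hcard ▸ hq.pow)
  have hord (v : R) (hv : v ^ 2 = u) : v ∈ maximalIdeal R ^ l ∧ v ∉ maximalIdeal R ^ (l + 1) :=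
    mem_pow_notMem_pow_succ_of_sq hπ (hv ▸ hu) (hv ▸ hu')
  obtain ⟨s, hs⟩ := hsq
  refine ⟨?_, hord, fun v v' hv hv' => ?_⟩
  · rw [ncard_setOf_sq_eq hπ h2 (pow_maximalIdeal_eq_bot hcardR hres hJ) hJ hkn hu hu' hs,
      hcardJ (n - l) (by omega), Nat.sub_sub_self (by omega)]
  · rcases sub_mem_or_add_mem_of_sq_eq_sq hπ h2 hJ (hord v' hv').1 (hord v' hv').2 (hord v hv).1
      (hv.trans hv'.symm) with h | h
    exacts [⟨v - v', h, Or.inl (by ring)⟩, ⟨v + v', h, Or.inr (by ring)⟩]
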